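/- arXiv:2312.02668 — 4 statements merged into one kernel-verified Lean document; each statement's English description precedes it below -/
import Mathlib

section
/- Let E be a finite index set of edges, let P and P' be disjoint nonempty finite subsets of E, and for each e ∈ E let a_e > 0, b_e > 0 be reals. Let w_i, w_max, W be reals with 1 ≤ w_i ≤ w_max and w_max ≤ W, and for each edge e let w_e be a real load satisfying w_i ≤ w_e ≤ W for e ∈ P and 0 ≤ w_e ≤ W for e ∈ P'. Set α = 2·log₂(1 + W + w_max). Define ΔΦ = Σ_{e∈P'} [(a_e(w_e+w_i)+b_e)·log₂(1+w_e+w_i) − (a_e w_e+b_e)·log₂(1+w_e)] − Σ_{e∈P} [(a_e w_e+b_e)·log₂(1+w_e) − (a_e(w_e−w_i)+b_e)·log₂(1+w_e−w_i)], and define c' = Σ_{e∈P'} (a_e(w_e+w_i)+b_e)·w_i/(w_e+w_i) and c = Σ_{e∈P} (a_e w_e+b_e)·w_i/w_e. Then ΔΦ < α·c' − c. -/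
/-!
The estimate holds edge by edge. On an edge the player leaves, with load `u = w_e ≥ w_i ≥ 1`,
`log₂ (1 + x)` has secant slope at least `1 / u` on `[u - w_i, u]`: split the interval at `u - 1`
and use `x ≤ log₂ (1 + x)` on `[0, 1]` for the first piece and `log₂ y ≥ log y ≥ 1 - 1 / y` for
the second. Hence the potential drops by at least the player's cost share there. On an edge the
player joins, `log (1 + x) / x` is decreasing, so the potential rises by less than twice the cost
share times `log₂ (1 + w_e + w_i) ≤ α / 2`, strictly because `b_e > 0`.
-/

open Finset

lemma mul_log_one_add_le_mul_log_one_add {t s : ℝ} (ht : 0 ≤ t) (hts : t ≤ s) :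
    t * Real.log (1 + s) ≤ s * Real.log (1 + t) := by
  have ht₁ : 0 < 1 + t := by linarith
  have hgap : Real.log (1 + s) - Real.log (1 + t) ≤ (s - t) / (1 + t) := by
    have h := Real.log_le_sub_one_of_pos (div_pos (by linarith : (0 : ℝ) < 1 + s) ht₁)
    rwa [Real.log_div (by linarith) ht₁.ne', div_sub_one ht₁.ne', add_sub_add_left_eq_sub] at h
  have hlow : t / (1 + t) ≤ Real.log (1 + t) := by
    have h := Real.one_sub_inv_le_log_of_pos ht₁
    rwa [show 1 - (1 + t)⁻¹ = t / (1 + t) by field_simp; ring] at h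
  calc t * Real.log (1 + s)
      = t * Real.log (1 + t) + t * (Real.log (1 + s) - Real.log (1 + t)) := by ring
    _ ≤ t * Real.log (1 + t) + t * ((s - t) / (1 + t)) := by gcongr
    _ = t * Real.log (1 + t) + (s - t) * (t / (1 + t)) := by ring
    _ ≤ t * Real.log (1 + t) + (s - t) * Real.log (1 + t) := by gcongr
    _ = s * Real.log (1 + t) := by ring

lemma le_logb_two_one_add {x : ℝ} (hx₀ : 0 ≤ x) (hx₁ : x ≤ 1) : x ≤ Real.logb 2 (1 + x) := by
  rw [Real.logb, le_div_iff₀ (Real.log_pos one_lt_two)]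
  simpa [one_add_one_eq_two] using mul_log_one_add_le_mul_log_one_add hx₀ hx₁

lemma div_le_logb_two_one_add_sub_logb_two {d u : ℝ} (hd : 1 ≤ d) (hdu : d ≤ u) :
    d / u ≤ Real.logb 2 (1 + u) - Real.logb 2 (1 + u - d) := by
  have hu : 0 < u := by linarith
  have hrest : 0 < 1 + u - d := by linarith
  have hfirst : 1 / u ≤ Real.logb 2 (1 + u) - Real.logb 2 u := by
    have h := le_logb_two_one_add (x := 1 / u) (by positivity) ((div_le_one hu).2 (by linarith))
    rwa [one_add_div hu.ne', add_comm, Real.logb_div (by linarith) hu.ne'] at h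
  have hsecond : (d - 1) / u ≤ Real.logb 2 u - Real.logb 2 (1 + u - d) := by
    have hy : 1 ≤ u / (1 + u - d) := (one_le_div hrest).2 (by linarith)
    have hlog : (d - 1) / u ≤ Real.log (u / (1 + u - d)) := by
      have h := Real.one_sub_inv_le_log_of_pos (zero_lt_one.trans_le hy)
      rwa [inv_div, one_sub_div hu.ne', show u - (1 + u - d) = d - 1 by ring] at h
    -- `log₂ y ≥ log y` for `y ≥ 1`, because `log 2 ≤ 2 - 1`.
    have hlogb : Real.log (u / (1 + u - d)) ≤ Real.logb 2 (u / (1 + u - d)) :=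
      le_div_self (Real.log_nonneg hy) (Real.log_pos one_lt_two)
        ((Real.log_le_sub_one_of_pos two_pos).trans (by norm_num))
    rw [← Real.logb_div hu.ne' hrest.ne']
    exact hlog.trans hlogb
  calc d / u = 1 / u + (d - 1) / u := by ring
    _ ≤ _ := by linarith

lemma cost_share_le_potential_decrease {a b d u : ℝ} (ha : 0 ≤ a) (hb : 0 ≤ b) (hd : 1 ≤ d)
    (hdu : d ≤ u) :
    (a * u + b) * d / u ≤
      (a * u + b) * Real.logb 2 (1 + u) - (a * (u - d) + b) * Real.logb 2 (1 + u - d) := by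
  have hM : 0 ≤ Real.logb 2 (1 + u - d) := Real.logb_nonneg one_lt_two (by linarith)
  have hcost : 0 ≤ a * u + b := add_nonneg (mul_nonneg ha (by linarith)) hb
  calc (a * u + b) * d / u
      = (a * u + b) * (d / u) := mul_div_assoc _ _ _
    _ ≤ (a * u + b) * (Real.logb 2 (1 + u) - Real.logb 2 (1 + u - d)) :=
      mul_le_mul_of_nonneg_left (div_le_logb_two_one_add_sub_logb_two hd hdu) hcost
    _ ≤ (a * u + b) * (Real.logb 2 (1 + u) - Real.logb 2 (1 + u - d))
        + a * d * Real.logb 2 (1 + u - d) :=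
      le_add_of_nonneg_right (mul_nonneg (mul_nonneg ha (by linarith)) hM)
    _ = _ := by ring

lemma potential_increase_lt_two_mul_cost_share {a b d u K : ℝ} (ha : 0 ≤ a) (hb : 0 < b)
    (hu : 0 ≤ u) (hd : 0 < d) (hK : Real.logb 2 (1 + u + d) ≤ K) :
    (a * (u + d) + b) * Real.logb 2 (1 + u + d) - (a * u + b) * Real.logb 2 (1 + u)
      < 2 * K * ((a * (u + d) + b) * d / (u + d)) := by
  set L := Real.logb 2 (1 + u + d)
  set M := Real.logb 2 (1 + u)
  set c := a * (u + d) + b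
  have hud : 0 < u + d := by linarith
  have hL : 0 < L := Real.logb_pos one_lt_two (by linarith)
  have hML : M ≤ L := Real.logb_le_logb_of_le one_lt_two (by linarith) (by linarith)
  have hconc : (u + d) * (L - M) ≤ d * L := by
    have h := mul_log_one_add_le_mul_log_one_add hu (le_add_of_nonneg_right hd.le)
    have h' : u * L ≤ (u + d) * M := by
      simpa only [L, M, Real.logb, mul_div_assoc, add_assoc] using
        div_le_div_of_nonneg_right h (Real.log_nonneg one_le_two)
    linarith
  rw [← mul_div_assoc, lt_div_iff₀ hud]
  calc (c * L - (a * u + b) * M) * (u + d)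
      = c * ((u + d) * (L - M)) + a * d * (u + d) * M := by ring
    _ ≤ c * (d * L) + a * d * (u + d) * L := by gcongr
    _ < c * (d * L) + (a * d * (u + d) * L + b * d * L) := by
      linarith [mul_pos (mul_pos hb hd) hL]
    _ = 2 * (c * d) * L := by ring
    _ ≤ 2 * (c * d) * K := by gcongr
    _ = 2 * K * (c * d) := by ring

theorem potential_change_lt_general {E : Type*} (P P' : Finset E)
    (hP' : P'.Nonempty)
    (a b : E → ℝ) (ha : ∀ e, 0 < a e) (hb : ∀ e, 0 < b e)
    (wi wmax W : ℝ) (hwi : 1 ≤ wi) (hwimax : wi ≤ wmax)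
    (w : E → ℝ)
    (hwP : ∀ e ∈ P, wi ≤ w e ∧ w e ≤ W)
    (hwP' : ∀ e ∈ P', 0 ≤ w e ∧ w e ≤ W)
    (α : ℝ) (hα : α = 2 * Real.logb 2 (1 + W + wmax))
    (ΔΦ c' c : ℝ)
    (hΔΦ : ΔΦ =
      (∑ e ∈ P', ((a e * (w e + wi) + b e) * Real.logb 2 (1 + w e + wi)
          - (a e * w e + b e) * Real.logb 2 (1 + w e)))
      - ∑ e ∈ P, ((a e * w e + b e) * Real.logb 2 (1 + w e)
          - (a e * (w e - wi) + b e) * Real.logb 2 (1 + w e - wi)))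
    (hc' : c' = ∑ e ∈ P', (a e * (w e + wi) + b e) * wi / (w e + wi))
    (hc : c = ∑ e ∈ P, (a e * w e + b e) * wi / w e) :
    ΔΦ < α * c' - c := by
  subst hα hΔΦ hc' hc
  have hjoin := sum_lt_sum_of_nonempty hP' fun e he =>
    potential_increase_lt_two_mul_cost_share (ha e).le (hb e) (hwP' e he).1
      (zero_lt_one.trans_le hwi) (K := Real.logb 2 (1 + W + wmax))
      (Real.logb_le_logb_of_le one_lt_two (by linarith [(hwP' e he).1])
        (by linarith [(hwP' e he).2]))
  have hleave := sum_le_sum fun e he =>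
    cost_share_le_potential_decrease (ha e).le (hb e).le hwi (hwP e he).1
  rw [← mul_sum] at hjoin
  linarith

/-- The analytic core of the approximate-potential argument: for an `α`-improving
deviation of a player of weight `w_i` from path `P` to the disjoint path `P'`,
with affine linear edge costs `c_e(w) = a_e·w + b_e`, loads `w_e`, and
`α = 2·log₂(1 + W + w_max)`, the change in potential satisfies `ΔΦ < α·c' − c`. -/
theorem potential_change_lt {E : Type*} [Fintype E] (P P' : Finset E)
    (hdisj : Disjoint P P') (hP : P.Nonempty) (hP' : P'.Nonempty)
    (a b : E → ℝ) (ha : ∀ e, 0 < a e) (hb : ∀ e, 0 < b e)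
    (wi wmax W : ℝ) (hwi : 1 ≤ wi) (hwimax : wi ≤ wmax) (hmaxW : wmax ≤ W)
    (w : E → ℝ)
    (hwP : ∀ e ∈ P, wi ≤ w e ∧ w e ≤ W)
    (hwP' : ∀ e ∈ P', 0 ≤ w e ∧ w e ≤ W)
    (α : ℝ) (hα : α = 2 * Real.logb 2 (1 + W + wmax))
    (ΔΦ c' c : ℝ)
    (hΔΦ : ΔΦ =
      (∑ e ∈ P', ((a e * (w e + wi) + b e) * Real.logb 2 (1 + w e + wi)
          - (a e * w e + b e) * Real.logb 2 (1 + w e)))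
      - ∑ e ∈ P, ((a e * w e + b e) * Real.logb 2 (1 + w e)
          - (a e * (w e - wi) + b e) * Real.logb 2 (1 + w e - wi)))
    (hc' : c' = ∑ e ∈ P', (a e * (w e + wi) + b e) * wi / (w e + wi))
    (hc : c = ∑ e ∈ P, (a e * w e + b e) * wi / w e) :
    ΔΦ < α * c' - c :=
  potential_change_lt_general P P' hP' a b ha hb wi wmax W hwi hwimax w hwP hwP' α hα ΔΦ c' c hΔΦ
    hc' hc
end

section
/- Let E be a finite index set of edges, let P and P' be disjoint nonempty finite subsets of E, and for each e ∈ E let a_e > 0, b_e > 0 be reals. Let w_i, w_max, W be reals with 1 ≤ w_i ≤ w_max and w_max ≤ W, and for each edge e let w_e be a real load satisfying w_i ≤ w_e ≤ W for e ∈ P and 0 ≤ w_e ≤ W for e ∈ P'. Set α = 2·log₂(1 + W + w_max). Define c' = Σ_{e∈P'} (a_e(w_e+w_i)+b_e)·w_i/(w_e+w_i) and c = Σ_{e∈P} (a_e w_e+b_e)·w_i/w_e. If α·c' ≤ c (the deviation from P to P' is α-improving), then Σ_{e∈P'} (a_e(w_e+w_i)+b_e)·log₂(1+w_e+w_i) +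 Σ_{e∈P} (a_e(w_e−w_i)+b_e)·log₂(1+w_e−w_i) < Σ_{e∈P'} (a_e w_e+b_e)·log₂(1+w_e) + Σ_{e∈P} (a_e w_e+b_e)·log₂(1+w_e); that is, every α-improving deviation strictly decreases the potential Φ(P) = Σ_{e∈E} c_e(w_e)·log₂(1+w_e). -/
/-!
Compare the potential edge by edge. Leaving an edge of load `w ≥ d` lowers `log₂(1 + w)` by at
least `d / w`, because `log₂(1 + x) ≥ min x 1`; so each old edge loses at least the player's
old cost share. Joining an edge of load `w` raises `x ↦ x · log₂(1 + x)` by less than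
`2 d · log₂ M` for any `M ≥ max (exp 1) (1 + w + d)`, and since `c_e(x)/x` is decreasing this bounds
the increase on a new edge by `α` times the player's new cost share. Summing, the potential
changes by less than `α c' - c ≤ 0`.
-/

open Finset Real

theorem min_le_logb_two_one_add {x : ℝ} (hx : 0 ≤ x) : min x 1 ≤ logb 2 (1 + x) := by
  rcases le_total x 1 with hx1 | hx1
  · rw [min_eq_left hx1, le_logb_iff_rpow_le one_lt_two (by linarith)]
    have h := rpow_one_add_le_one_add_mul_self (s := 1) (by norm_num) hx hx1
    norm_num at h
    linarith
  · calc min x 1 = logb 2 2 := by rw [min_eq_right hx1, logb_self_eq_one one_lt_two]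
      _ ≤ logb 2 (1 + x) := logb_le_logb_of_le one_lt_two two_pos (by linarith)

theorem div_le_logb_two_one_add_sub_logb {d w : ℝ} (hd : 1 ≤ d) (hdw : d ≤ w) :
    d / w ≤ logb 2 (1 + w) - logb 2 (1 + w - d) := by
  have hu : 0 < 1 + w - d := by linarith
  calc d / w ≤ min (d / (1 + w - d)) 1 :=
        le_min (div_le_div_of_nonneg_left (by linarith) hu (by linarith))
          ((div_le_one (by linarith)).2 hdw)
    _ ≤ logb 2 (1 + d / (1 + w - d)) := min_le_logb_two_one_add (by positivity)
    _ = logb 2 (1 + w) - logb 2 (1 + w - d) := by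
        rw [← logb_div (by linarith) hu.ne']
        congr 1
        field_simp
        ring

theorem logb_sub_logb_le_div {b x y : ℝ} (hb : 1 < b) (hx : 0 < x) (hy : 0 < y) :
    logb b y - logb b x ≤ (y - x) / (x * log b) := by
  have hlogb : 0 < log b := log_pos hb
  calc logb b y - logb b x = log (y / x) / log b := by rw [← logb_div hy.ne' hx.ne', logb]
    _ ≤ (y / x - 1) / log b := by gcongr; exact log_le_sub_one_of_pos (by positivity)
    _ = (y - x) / (x * log b) := by field_simp

theorem add_mul_logb_sub_mul_logb_lt {b w d M : ℝ} (hb : 1 < b) (hw : 0 ≤ w) (hd : 0 < d)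
    (hM : 1 + w + d ≤ M) (he : exp 1 ≤ M) :
    (w + d) * logb b (1 + w + d) - w * logb b (1 + w) < 2 * d * logb b M := by
  have hlogb : 0 < log b := log_pos hb
  have hlogM : 1 ≤ log M := (le_log_iff_exp_le (by linarith [exp_pos 1])).2 he
  have hinc : w * (logb b (1 + w + d) - logb b (1 + w)) < d * logb b M :=
    calc w * (logb b (1 + w + d) - logb b (1 + w))
        ≤ w * (d / ((1 + w) * log b)) := by
          gcongr
          simpa using logb_sub_logb_le_div hb (x := 1 + w) (y := 1 + w + d) (by linarith)
            (by linarith)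
      _ = w / (1 + w) * (d / log b) := by field_simp
      _ < 1 * (d / log b) := by gcongr; exact (div_lt_one (by linarith)).2 (by linarith)
      _ ≤ d * logb b M := by
          rw [one_mul, logb, mul_div_assoc']
          gcongr
          nlinarith
  calc (w + d) * logb b (1 + w + d) - w * logb b (1 + w)
      = d * logb b (1 + w + d) + w * (logb b (1 + w + d) - logb b (1 + w)) := by ring
    _ < d * logb b M + d * logb b M :=
        add_lt_add_of_le_of_lt
          (mul_le_mul_of_nonneg_left (logb_le_logb_of_le hb (by linarith) hM) hd.le) hinc
    _ = 2 * d * logb b M := by ring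

theorem affine_mul_logb_increase_lt {a b w d M : ℝ} (ha : 0 ≤ a) (hb : 0 < b) (hw : 0 ≤ w)
    (hd : 0 < d) (hM : 1 + w + d ≤ M) (he : exp 1 ≤ M) :
    (a * (w + d) + b) * logb 2 (1 + w + d) - (a * w + b) * logb 2 (1 + w)
      < 2 * logb 2 M * ((a * (w + d) + b) * d / (w + d)) := by
  have hs : 0 < w + d := by linarith
  have hC : 0 < a * (w + d) + b := by positivity
  have hshare : (a * (w + d) + b) * w / (w + d) ≤ a * w + b := by
    rw [div_le_iff₀ hs]; nlinarith
  calc (a * (w + d) + b) * logb 2 (1 + w + d) - (a * w + b) * logb 2 (1 + w)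
      ≤ (a * (w + d) + b) * logb 2 (1 + w + d)
          - (a * (w + d) + b) * w / (w + d) * logb 2 (1 + w) := by
        gcongr
        exact logb_nonneg one_lt_two (by linarith)
    _ = (a * (w + d) + b) / (w + d)
          * ((w + d) * logb 2 (1 + w + d) - w * logb 2 (1 + w)) := by
        field_simp
    _ < (a * (w + d) + b) / (w + d) * (2 * d * logb 2 M) := by
        gcongr
        exact add_mul_logb_sub_mul_logb_lt one_lt_two hw hd hM he
    _ = 2 * logb 2 M * ((a * (w + d) + b) * d / (w + d)) := by ring

theorem affine_mul_logb_decrease_le {a b w d : ℝ} (ha : 0 ≤ a) (hb : 0 ≤ b) (hd : 1 ≤ d)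
    (hdw : d ≤ w) :
    (a * (w - d) + b) * logb 2 (1 + w - d) - (a * w + b) * logb 2 (1 + w)
      ≤ -((a * w + b) * d / w) := by
  have hC : 0 ≤ a * w + b := by nlinarith
  calc (a * (w - d) + b) * logb 2 (1 + w - d) - (a * w + b) * logb 2 (1 + w)
      ≤ (a * w + b) * logb 2 (1 + w - d) - (a * w + b) * logb 2 (1 + w) := by
        gcongr
        · exact logb_nonneg one_lt_two (by linarith)
        · linarith
    _ = -((a * w + b) * (logb 2 (1 + w) - logb 2 (1 + w - d))) := by ring
    _ ≤ -((a * w + b) * (d / w)) := by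
        gcongr
        exact div_le_logb_two_one_add_sub_logb hd hdw
    _ = -((a * w + b) * d / w) := by ring

theorem potential_strict_decrease_general {E : Type*} (P P' : Finset E)
    (hP' : P'.Nonempty)
    (a b : E → ℝ) (ha : ∀ e, 0 < a e) (hb : ∀ e, 0 < b e)
    (wi wmax W : ℝ) (hwi : 1 ≤ wi) (hwimax : wi ≤ wmax) (hmaxW : wmax ≤ W)
    (w : E → ℝ)
    (hwP : ∀ e ∈ P, wi ≤ w e ∧ w e ≤ W)
    (hwP' : ∀ e ∈ P', 0 ≤ w e ∧ w e ≤ W)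
    (α : ℝ) (hα : α = 2 * Real.logb 2 (1 + W + wmax))
    (c' c : ℝ)
    (hc' : c' = ∑ e ∈ P', (a e * (w e + wi) + b e) * wi / (w e + wi))
    (hc : c = ∑ e ∈ P, (a e * w e + b e) * wi / w e)
    (himp : α * c' ≤ c) :
    (∑ e ∈ P', (a e * (w e + wi) + b e) * Real.logb 2 (1 + w e + wi))
      + (∑ e ∈ P, (a e * (w e - wi) + b e) * Real.logb 2 (1 + w e - wi))
    < (∑ e ∈ P', (a e * w e + b e) * Real.logb 2 (1 + w e))
      + (∑ e ∈ P, (a e * w e + b e) * Real.logb 2 (1 + w e)) := by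
  subst hα hc' hc
  have hM : exp 1 ≤ 1 + W + wmax := exp_one_lt_three.le.trans (by linarith)
  have hnew : ∑ e ∈ P', ((a e * (w e + wi) + b e) * logb 2 (1 + w e + wi)
        - (a e * w e + b e) * logb 2 (1 + w e))
      < 2 * logb 2 (1 + W + wmax) * ∑ e ∈ P', (a e * (w e + wi) + b e) * wi / (w e + wi) := by
    rw [mul_sum]
    refine sum_lt_sum_of_nonempty hP' fun e he => ?_
    exact affine_mul_logb_increase_lt (ha e).le (hb e) (hwP' e he).1 (by linarith)
      (by linarith [(hwP' e he).2]) hM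
  have hold : ∑ e ∈ P, ((a e * (w e - wi) + b e) * logb 2 (1 + w e - wi)
        - (a e * w e + b e) * logb 2 (1 + w e))
      ≤ -∑ e ∈ P, (a e * w e + b e) * wi / w e := by
    rw [← sum_neg_distrib]
    exact sum_le_sum fun e he =>
      affine_mul_logb_decrease_le (ha e).le (hb e).le hwi (hwP e he).1
  rw [sum_sub_distrib] at hnew hold
  linarith

/-- Every `α`-improving deviation strictly decreases the potential
`Φ(P) = Σ_e c_e(w_e)·log₂(1+w_e)` in the weighted Shapley network design game with
affine linear edge costs `c_e(w) = a_e·w + b_e` and `α = 2·log₂(1 + W + w_max)`. -/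
theorem potential_strict_decrease {E : Type*} [Fintype E] (P P' : Finset E)
    (hdisj : Disjoint P P') (hP : P.Nonempty) (hP' : P'.Nonempty)
    (a b : E → ℝ) (ha : ∀ e, 0 < a e) (hb : ∀ e, 0 < b e)
    (wi wmax W : ℝ) (hwi : 1 ≤ wi) (hwimax : wi ≤ wmax) (hmaxW : wmax ≤ W)
    (w : E → ℝ)
    (hwP : ∀ e ∈ P, wi ≤ w e ∧ w e ≤ W)
    (hwP' : ∀ e ∈ P', 0 ≤ w e ∧ w e ≤ W)
    (α : ℝ) (hα : α = 2 * Real.logb 2 (1 + W + wmax))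
    (c' c : ℝ)
    (hc' : c' = ∑ e ∈ P', (a e * (w e + wi) + b e) * wi / (w e + wi))
    (hc : c = ∑ e ∈ P, (a e * w e + b e) * wi / w e)
    (himp : α * c' ≤ c) :
    (∑ e ∈ P', (a e * (w e + wi) + b e) * Real.logb 2 (1 + w e + wi))
      + (∑ e ∈ P, (a e * (w e - wi) + b e) * Real.logb 2 (1 + w e - wi))
    < (∑ e ∈ P', (a e * w e + b e) * Real.logb 2 (1 + w e))
      + (∑ e ∈ P, (a e * w e + b e) * Real.logb 2 (1 + w e)) :=
  potential_strict_decrease_general P P' hP' a b ha hb wi wmax W hwi hwimax hmaxW w hwP hwP' α hα c'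
    c hc' hc himp
end

section
/- For all real numbers u ≥ 0 and x > 0, log₂(1 + u + x) − log₂(1 + u) < log₂(e·(1 + x)) · x/(u + x), where e is Euler's number. -/
/-! With `t = x / (1 + u)` the left side is `log₂ (1 + t)`. Splitting `u + x = (1 + u) + (x - 1)`,
the strict bound `log (1 + t) < t` handles the first part and `log (1 + t) ≤ log (1 + x)` the
second, which is the paper's `e (1 + x) ≥ (1 + t) ^ ((u + x) / x)` after taking logarithms. -/

open Real

lemma log_sub_log_eq_log_one_add_div {u x : ℝ} (hu : 0 ≤ u) (hx : 0 < x) :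
    log (1 + u + x) - log (1 + u) = log (1 + x / (1 + u)) := by
  have hu1 : 0 < 1 + u := by linarith
  rw [← log_div (by linarith) hu1.ne', add_div, div_self hu1.ne']

lemma log_one_add_div_mul_lt {u x : ℝ} (hu : 0 ≤ u) (hx : 0 < x) :
    log (1 + x / (1 + u)) * (u + x) < (1 + log (1 + x)) * x := by
  have hu1 : 0 < 1 + u := by linarith
  set t := x / (1 + u) with ht
  have ht_pos : 0 < t := div_pos hx hu1
  have hlog_lt : log (1 + t) < t := by
    linarith [log_lt_sub_one_of_pos (x := 1 + t) (by linarith) (by linarith)]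
  have hlog_nonneg : 0 ≤ log (1 + t) := log_nonneg (by linarith)
  have hlog_le : log (1 + t) ≤ log (1 + x) :=
    log_le_log (by linarith) (by linarith [div_le_self hx.le (by linarith : 1 ≤ 1 + u)])
  calc log (1 + t) * (u + x) = log (1 + t) * (1 + u) + log (1 + t) * (x - 1) := by ring
    _ < t * (1 + u) + log (1 + t) * x :=
        add_lt_add_of_lt_of_le (mul_lt_mul_of_pos_right hlog_lt hu1)
          (mul_le_mul_of_nonneg_left (by linarith) hlog_nonneg)
    _ ≤ x + log (1 + x) * x := by
        rw [ht, div_mul_cancel₀ x hu1.ne']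
        gcongr
    _ = (1 + log (1 + x)) * x := by ring

lemma log_sub_log_lt {u x : ℝ} (hu : 0 ≤ u) (hx : 0 < x) :
    log (1 + u + x) - log (1 + u) < log (exp 1 * (1 + x)) * (x / (u + x)) := by
  rw [log_sub_log_eq_log_one_add_div hu hx, log_mul (exp_ne_zero 1) (by linarith), log_exp,
    mul_div_assoc', lt_div_iff₀ (by linarith)]
  exact log_one_add_div_mul_lt hu hx

/-- For all real numbers `u ≥ 0` and `x > 0`,
`log₂(1 + u + x) − log₂(1 + u) < log₂(e·(1 + x)) · x/(u + x)`. -/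
theorem log2_diff_lt (u x : ℝ) (hu : 0 ≤ u) (hx : 0 < x) :
    Real.logb 2 (1 + u + x) - Real.logb 2 (1 + u) <
      Real.logb 2 (Real.exp 1 * (1 + x)) * (x / (u + x)) := by
  simp only [logb]
  rw [← sub_div, div_mul_eq_mul_div]
  exact div_lt_div_of_pos_right (log_sub_log_lt hu hx) (log_pos one_lt_two)
end

section
/- Let n ≥ 2 be an integer, φ ≥ 1 and α ≥ 1 be reals, and λ a natural number. Let X_1, …, X_n, Y_1, …, Y_n be 2n mutually independent real random variables, each of which is φ-smooth, i.e., supported in [0,1] with a probability density function bounded above by φ. Define g(x) = min{ (α/x)·ln(α/x), n^λ } for x > 0. Then E[ g( min_{1≤i≤n} (X_i + Y_i) ) ] ≤ α·φ·(n² + 1)·ln(α·φ·n). -/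
/-!
Write `M = minᵢ (Xᵢ + Yᵢ)`. For a single pair, conditioning on `Xᵢ` and using the density
bound twice gives `P(Xᵢ + Yᵢ < t) ≤ φ²t²/2`, so a union bound yields `P(M < t) ≤ nφ²t²/2`.
The function `x ↦ (α/x) log (α/x)` is (up to its negative part) decreasing, so its expectation
is controlled by cutting `(0, ∞)` at the geometric thresholds `tₖ = (4/5)ᵏ/(φn)`: the value
`αφn log (αφn)` at `t₀` bounds it on `M ≥ t₀`, and the increments between consecutive
thresholds, weighted by `P(M < tₖ)`, form a convergent arithmetico-geometric series.
-/

open MeasureTheory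

/-- A real random variable `X` is `φ`-smooth if it takes values in `[0,1]` and its
distribution has a probability density function (w.r.t. Lebesgue measure) bounded
above by `φ`. -/
def IsPhiSmooth {Ω : Type*} [MeasurableSpace Ω] (μ : Measure Ω) (φ : ℝ)
    (X : Ω → ℝ) : Prop :=
  ∃ f : ℝ → ENNReal, (∀ x, f x ≤ ENNReal.ofReal φ) ∧
    (∀ x, x ∉ Set.Icc (0 : ℝ) 1 → f x = 0) ∧
    Measure.map X μ = volume.withDensity f

open Set ProbabilityTheory

theorem lintegral_Icc_ofReal_sub_le {t : ℝ} (ht : 0 ≤ t) :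
    ∫⁻ x in Icc 0 1, ENNReal.ofReal (t - x) ≤ ENNReal.ofReal (t ^ 2 / 2) := by
  have h_out : ∫⁻ x in Ioi t, ENNReal.ofReal (t - x) = 0 := by
    rw [setLIntegral_congr_fun measurableSet_Ioi (g := fun _ => 0)
      fun x hx => ENNReal.ofReal_of_nonpos (by linarith [mem_Ioi.mp hx]), lintegral_zero]
  have h_in : ∫⁻ x in Icc 0 t, ENNReal.ofReal (t - x) = ENNReal.ofReal (t ^ 2 / 2) := by
    rw [← ofReal_integral_eq_lintegral_ofReal (f := fun x => t - x)
      ((continuous_const.sub continuous_id).integrableOn_Icc)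
      (ae_restrict_of_forall_mem measurableSet_Icc fun x hx => by simpa using hx.2),
      integral_Icc_eq_integral_Ioc, ← intervalIntegral.integral_of_le ht,
      intervalIntegral.integral_comp_sub_left (fun x => x)]
    simp [integral_id]
  calc ∫⁻ x in Icc 0 1, ENNReal.ofReal (t - x)
      ≤ ∫⁻ x in Icc 0 t ∪ Ioi t, ENNReal.ofReal (t - x) :=
        lintegral_mono_set fun x hx => (le_or_gt x t).imp (fun h => ⟨hx.1, h⟩) id
    _ ≤ ENNReal.ofReal (t ^ 2 / 2) :=
        (lintegral_union_le _ _ _).trans_eq (by rw [h_in, h_out, add_zero])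

namespace IsPhiSmooth

variable {Ω : Type*} [MeasurableSpace Ω] {μ : Measure Ω} {φ : ℝ} {X Y : Ω → ℝ}

theorem map_le (h : IsPhiSmooth μ φ X) :
    μ.map X ≤ ENNReal.ofReal φ • volume.restrict (Icc 0 1) := by
  obtain ⟨f, hf_le, hf_zero, hmap⟩ := h
  rw [hmap, ← withDensity_const, ← withDensity_indicator measurableSet_Icc]
  refine withDensity_mono (Filter.Eventually.of_forall fun x => ?_)
  by_cases hx : x ∈ Icc (0 : ℝ) 1
  · simpa [indicator_of_mem hx] using hf_le x
  · simp [indicator_of_notMem hx, hf_zero x hx]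

theorem map_Iio_le (h : IsPhiSmooth μ φ X) (c : ℝ) :
    μ.map X (Iio c) ≤ ENNReal.ofReal φ * ENNReal.ofReal c := by
  refine (Measure.le_iff'.mp h.map_le _).trans ?_
  rw [Measure.smul_apply, smul_eq_mul, Measure.restrict_apply measurableSet_Iio]
  gcongr
  calc volume (Iio c ∩ Icc 0 1) ≤ volume (Ico 0 c) :=
        measure_mono fun x hx => ⟨hx.2.1, hx.1⟩
    _ = ENNReal.ofReal c := by simp

theorem ae_pos (h : IsPhiSmooth μ φ X) (hX : AEMeasurable X μ) : ∀ᵐ ω ∂μ, 0 < X ω := by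
  refine ae_of_ae_map hX (ae_mono h.map_le (Measure.ae_smul_measure ?_ _))
  filter_upwards [ae_restrict_mem measurableSet_Icc,
    ae_restrict_of_ae (Measure.ae_ne volume 0)] with y hy hy0
  exact hy.1.lt_of_ne' hy0

theorem measure_add_lt_le [IsFiniteMeasure μ] (hφ : 0 ≤ φ)
    (hX : IsPhiSmooth μ φ X) (hY : IsPhiSmooth μ φ Y)
    (hmX : AEMeasurable X μ) (hmY : AEMeasurable Y μ) (hXY : IndepFun X Y μ)
    {t : ℝ} (ht : 0 ≤ t) :
    μ {ω | X ω + Y ω < t} ≤ ENNReal.ofReal (φ ^ 2 / 2 * t ^ 2) := by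
  have hS : MeasurableSet {p : ℝ × ℝ | p.1 + p.2 < t} :=
    measurableSet_lt (measurable_fst.add measurable_snd) measurable_const
  have h_prod : μ {ω | X ω + Y ω < t} = (μ.map X).prod (μ.map Y) {p | p.1 + p.2 < t} := by
    rw [← (indepFun_iff_map_prod_eq_prod_map_map hmX hmY).mp hXY,
      Measure.map_apply_of_aemeasurable (hmX.prodMk hmY) hS]
    rfl
  rw [h_prod, Measure.prod_apply hS]
  calc ∫⁻ x, μ.map Y (Prod.mk x ⁻¹' {p | p.1 + p.2 < t}) ∂μ.map X
      = ∫⁻ x, μ.map Y (Iio (t - x)) ∂μ.map X := by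
        congr! 3 with x
        ext y
        simp [lt_sub_iff_add_lt']
    _ ≤ ∫⁻ x, ENNReal.ofReal φ * ENNReal.ofReal (t - x) ∂μ.map X :=
        lintegral_mono fun x => hY.map_Iio_le _
    _ ≤ ∫⁻ x, ENNReal.ofReal φ * ENNReal.ofReal (t - x)
          ∂(ENNReal.ofReal φ • volume.restrict (Icc 0 1)) :=
        lintegral_mono' hX.map_le le_rfl
    _ = ENNReal.ofReal φ * (ENNReal.ofReal φ * ∫⁻ x in Icc 0 1, ENNReal.ofReal (t - x)) := by
        rw [lintegral_smul_measure, smul_eq_mul, lintegral_const_mul]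
        fun_prop
    _ ≤ ENNReal.ofReal φ * (ENNReal.ofReal φ * ENNReal.ofReal (t ^ 2 / 2)) := by
        gcongr
        exact lintegral_Icc_ofReal_sub_le ht
    _ = ENNReal.ofReal (φ ^ 2 / 2 * t ^ 2) := by
        rw [← ENNReal.ofReal_mul hφ, ← ENNReal.ofReal_mul hφ]
        ring_nf

end IsPhiSmooth

section MinOfSums

variable {Ω ι : Type*} [MeasurableSpace Ω] {μ : Measure Ω} {φ : ℝ} {X Y : ι → Ω → ℝ}
  [Fintype ι] [Nonempty ι]

theorem ae_iInf_add_pos (hmX : ∀ i, AEMeasurable (X i) μ) (hmY : ∀ i, AEMeasurable (Y i) μ)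
    (hX : ∀ i, IsPhiSmooth μ φ (X i)) (hY : ∀ i, IsPhiSmooth μ φ (Y i)) :
    ∀ᵐ ω ∂μ, 0 < ⨅ i, X i ω + Y i ω := by
  have h_pos : ∀ᵐ ω ∂μ, ∀ i, 0 < X i ω ∧ 0 < Y i ω :=
    ae_all_iff.mpr fun i => ((hX i).ae_pos (hmX i)).and ((hY i).ae_pos (hmY i))
  filter_upwards [h_pos] with ω hω
  obtain ⟨i, hi⟩ := exists_eq_ciInf_of_finite (f := fun i => X i ω + Y i ω)
  exact hi ▸ add_pos (hω i).1 (hω i).2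

theorem measure_iInf_add_lt_le [IsFiniteMeasure μ] (hφ : 0 ≤ φ)
    (hmX : ∀ i, AEMeasurable (X i) μ) (hmY : ∀ i, AEMeasurable (Y i) μ)
    (hX : ∀ i, IsPhiSmooth μ φ (X i)) (hY : ∀ i, IsPhiSmooth μ φ (Y i))
    (hXY : ∀ i, IndepFun (X i) (Y i) μ) {t : ℝ} (ht : 0 ≤ t) :
    μ {ω | ⨅ i, X i ω + Y i ω < t} ≤ ENNReal.ofReal (Fintype.card ι * φ ^ 2 / 2 * t ^ 2) := by
  have h_union : {ω | ⨅ i, X i ω + Y i ω < t} = ⋃ i, {ω | X i ω + Y i ω < t} := by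
    ext ω
    simp [ciInf_lt_iff (Finite.bddBelow_range _)]
  calc μ {ω | ⨅ i, X i ω + Y i ω < t}
      ≤ ∑ i, μ {ω | X i ω + Y i ω < t} := h_union ▸ measure_iUnion_fintype_le μ _
    _ ≤ ∑ _i : ι, ENNReal.ofReal (φ ^ 2 / 2 * t ^ 2) := by
        gcongr with i
        exact (hX i).measure_add_lt_le hφ (hY i) (hmX i) (hmY i) (hXY i) ht
    _ = ENNReal.ofReal (Fintype.card ι * φ ^ 2 / 2 * t ^ 2) := by
        rw [Finset.sum_const, Finset.card_univ, nsmul_eq_mul, ← ENNReal.ofReal_natCast,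
          ← ENNReal.ofReal_mul (by positivity)]
        ring_nf

end MinOfSums

theorem Real.mul_log_le_mul_log {y z : ℝ} (hy : 0 ≤ y) (hyz : y ≤ z) (hz : 1 ≤ z) :
    y * Real.log y ≤ z * Real.log z := by
  rcases le_total y 1 with hy1 | hy1
  · exact (Real.mul_log_nonpos hy hy1).trans
      (mul_nonneg (zero_le_one.trans hz) (Real.log_nonneg hz))
  · exact mul_le_mul hyz (Real.log_le_log (zero_lt_one.trans_le hy1) hyz)
      (Real.log_nonneg hy1) (zero_le_one.trans hz)

theorem ENNReal.ofReal_le_add_tsum_ite {v m : ℝ} {a t : ℕ → ℝ} (hex : ∃ k, t k ≤ m)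
    (hv : ∀ k, t k ≤ m → v ≤ a k) :
    ENNReal.ofReal v ≤
      ENNReal.ofReal (a 0) + ∑' k, if m < t k then ENNReal.ofReal (a (k + 1) - a k) else 0 := by
  classical
  have h_telescope : ∀ K, ENNReal.ofReal (a K) ≤
      ENNReal.ofReal (a 0) + ∑ k ∈ Finset.range K, ENNReal.ofReal (a (k + 1) - a k) := by
    intro K
    induction K with
    | zero => simp
    | succ K ih =>
      rw [Finset.sum_range_succ, ← add_assoc]
      calc ENNReal.ofReal (a (K + 1)) = ENNReal.ofReal (a K + (a (K + 1) - a K)) := by ring_nf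
        _ ≤ _ := ENNReal.ofReal_add_le.trans (add_le_add_left ih _)
  have hK := Nat.find_spec hex
  calc ENNReal.ofReal v ≤ ENNReal.ofReal (a (Nat.find hex)) := ENNReal.ofReal_le_ofReal (hv _ hK)
    _ ≤ _ := h_telescope _
    _ = ENNReal.ofReal (a 0) + ∑ k ∈ Finset.range (Nat.find hex),
          if m < t k then ENNReal.ofReal (a (k + 1) - a k) else 0 := by
        congr 1
        refine Finset.sum_congr rfl fun k hk => ?_
        rw [if_pos (lt_of_not_ge (Nat.find_min hex (Finset.mem_range.mp hk)))]
    _ ≤ _ := by gcongr; exact ENNReal.sum_le_tsum _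

theorem lintegral_ofReal_le_of_layers {Ω : Type*} [MeasurableSpace Ω] {μ : Measure Ω}
    {f M : Ω → ℝ} {a t : ℕ → ℝ} (hM : Measurable M)
    (h : ∀ᵐ ω ∂μ, (∃ k, t k ≤ M ω) ∧ ∀ k, t k ≤ M ω → f ω ≤ a k) :
    ∫⁻ ω, ENNReal.ofReal (f ω) ∂μ ≤ ENNReal.ofReal (a 0) * μ univ +
      ∑' k, ENNReal.ofReal (a (k + 1) - a k) * μ {ω | M ω < t k} := by
  have h_meas : ∀ k, MeasurableSet {ω | M ω < t k} := fun k => measurableSet_lt hM measurable_const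
  calc ∫⁻ ω, ENNReal.ofReal (f ω) ∂μ
      ≤ ∫⁻ ω, ENNReal.ofReal (a 0) +
          ∑' k, {ω | M ω < t k}.indicator (fun _ => ENNReal.ofReal (a (k + 1) - a k)) ω ∂μ := by
        refine lintegral_mono_ae (h.mono fun ω hω => ?_)
        simpa only [indicator_apply, mem_ofPred_eq] using
          ENNReal.ofReal_le_add_tsum_ite hω.1 hω.2
    _ = _ := by
        rw [lintegral_add_left measurable_const, lintegral_const,
          lintegral_tsum fun k => (measurable_const.indicator (h_meas k)).aemeasurable]
        exact congrArg _ (tsum_congr fun k => lintegral_indicator_const (h_meas k) _)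

theorem hasSum_layer_weights (ℓ : ℝ) :
    HasSum (fun k : ℕ => ((5 / 4) ^ (k + 1) * (ℓ + (k + 1) / 4) - (5 / 4) ^ k * (ℓ + k / 4)) *
      ((4 / 5) ^ k) ^ 2) (5 / 4 * ℓ + 45 / 16) := by
  have h_geom := hasSum_geometric_of_lt_one (r := (4 / 5 : ℝ)) (by norm_num) (by norm_num)
  have h_arith := hasSum_coe_mul_geometric_of_norm_lt_one (𝕜 := ℝ) (r := 4 / 5)
    (by norm_num [abs_of_pos])
  have h_term : ∀ k : ℕ, ((5 / 4 : ℝ) ^ (k + 1) * (ℓ + (k + 1) / 4) - (5 / 4) ^ k * (ℓ + k / 4)) *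
      ((4 / 5) ^ k) ^ 2 = (ℓ / 4 + 5 / 16) * (4 / 5) ^ k + 1 / 16 * (k * (4 / 5) ^ k) := by
    intro k
    have h_inv : (5 / 4 : ℝ) ^ k * (4 / 5) ^ k = 1 := by rw [← mul_pow]; norm_num
    linear_combination ((4 / 5 : ℝ) ^ k * (ℓ / 4 + k / 16 + 5 / 16)) * h_inv
  have h_value : 5 / 4 * ℓ + 45 / 16 =
      (ℓ / 4 + 5 / 16) * (1 - 4 / 5)⁻¹ + 1 / 16 * (4 / 5 / (1 - 4 / 5) ^ 2) := by
    norm_num; ring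
  simpa only [h_term, h_value] using (h_geom.mul_left _).add (h_arith.mul_left _)

theorem div_mul_log_div_le_of_pow_div_le {α N m : ℝ} (hN : 0 < N) (hαN : 1 ≤ α * N)
    (hm : 0 < m) {k : ℕ} (hk : (4 / 5) ^ k / N ≤ m) :
    α / m * Real.log (α / m) ≤ α * N * ((5 / 4) ^ k * (Real.log (α * N) + k / 4)) := by
  have hα : 0 < α := pos_of_mul_pos_left (zero_lt_one.trans_le hαN) hN.le
  have h_div : α / ((4 / 5) ^ k / N) = α * N * (5 / 4) ^ k := by
    simp only [div_div_eq_mul_div, div_pow]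
    field_simp
  have h_log : Real.log (5 / 4) ≤ 1 / 4 := by
    linarith [Real.log_le_sub_one_of_pos (by norm_num : (0 : ℝ) < 5 / 4)]
  calc α / m * Real.log (α / m) ≤ α / ((4 / 5) ^ k / N) * Real.log (α / ((4 / 5) ^ k / N)) :=
        Real.mul_log_le_mul_log (by positivity) (div_le_div_of_nonneg_left hα.le
          (by positivity) hk) (h_div ▸ one_le_mul_of_one_le_of_one_le hαN (one_le_pow₀ (by norm_num)))
    _ = α * N * ((5 / 4) ^ k * (Real.log (α * N) + k * Real.log (5 / 4))) := by
        rw [h_div, Real.log_mul (by positivity) (by positivity), Real.log_pow]; ring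
    _ ≤ α * N * ((5 / 4) ^ k * (Real.log (α * N) + k / 4)) := by
        gcongr
        linarith [mul_le_mul_of_nonneg_left h_log k.cast_nonneg]

theorem lintegral_ofReal_div_mul_log_le {Ω : Type*} [MeasurableSpace Ω] {μ : Measure Ω}
    [IsProbabilityMeasure μ] {M : Ω → ℝ} (hM : Measurable M) (hM_pos : ∀ᵐ ω ∂μ, 0 < M ω)
    {α N C : ℝ} (hN : 0 < N) (hαN : 1 ≤ α * N) (hC : 0 ≤ C)
    (h_tail : ∀ t, 0 < t → t ≤ N⁻¹ → μ {ω | M ω < t} ≤ ENNReal.ofReal (C * t ^ 2)) :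
    ∫⁻ ω, ENNReal.ofReal (α / M ω * Real.log (α / M ω)) ∂μ ≤
      ENNReal.ofReal (α * N * Real.log (α * N) +
        α * C / N * (5 / 4 * Real.log (α * N) + 45 / 16)) := by
  set ℓ := Real.log (α * N)
  -- With ratio `1/2` instead of `4/5` the series would be too large for the bound at `n = 2`.
  set t : ℕ → ℝ := fun k => (4 / 5) ^ k / N
  set a : ℕ → ℝ := fun k => α * N * ((5 / 4) ^ k * (ℓ + k / 4))
  have hα : 0 < α := pos_of_mul_pos_left (zero_lt_one.trans_le hαN) hN.le
  have hℓ : 0 ≤ ℓ := Real.log_nonneg hαN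
  have ht_pos : ∀ k, 0 < t k := fun k => by positivity
  have ht_le : ∀ k, t k ≤ N⁻¹ := fun k =>
    div_le_div_of_nonneg_right (pow_le_one₀ (by norm_num) (by norm_num)) hN.le |>.trans_eq
      (one_div N)
  have h_exists : ∀ m : ℝ, 0 < m → ∃ k, t k ≤ m := fun m hm => by
    obtain ⟨k, hk⟩ := exists_pow_lt_of_lt_one (mul_pos hm hN) (by norm_num : (4 / 5 : ℝ) < 1)
    exact ⟨k, (div_le_iff₀ hN).mpr hk.le⟩
  have h_step : ∀ k, a (k + 1) - a k = α * N * (5 / 4) ^ k * ((ℓ + k / 4) / 4 + 5 / 16) :=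
    fun k => by simp only [a]; push_cast; ring
  have h_weights : HasSum (fun k => (a (k + 1) - a k) * (C * t k ^ 2))
      (α * C / N * (5 / 4 * ℓ + 45 / 16)) := by
    refine ((hasSum_layer_weights ℓ).mul_left (α * C / N)).congr_fun fun k => ?_
    simp only [a, t]
    push_cast
    field_simp
  calc ∫⁻ ω, ENNReal.ofReal (α / M ω * Real.log (α / M ω)) ∂μ
      ≤ ENNReal.ofReal (a 0) * μ univ +
          ∑' k, ENNReal.ofReal (a (k + 1) - a k) * μ {ω | M ω < t k} :=
        lintegral_ofReal_le_of_layers hM (hM_pos.mono fun ω hω =>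
          ⟨h_exists _ hω, fun k hk => div_mul_log_div_le_of_pow_div_le hN hαN hω hk⟩)
    _ ≤ ENNReal.ofReal (a 0) + ∑' k, ENNReal.ofReal ((a (k + 1) - a k) * (C * t k ^ 2)) := by
        rw [measure_univ, mul_one]
        gcongr with k
        rw [ENNReal.ofReal_mul (h_step k ▸ by positivity)]
        gcongr
        exact h_tail _ (ht_pos k) (ht_le k)
    _ = ENNReal.ofReal (a 0 + α * C / N * (5 / 4 * ℓ + 45 / 16)) := by
        rw [← ENNReal.ofReal_tsum_of_nonneg
            (fun k => mul_nonneg (h_step k ▸ by positivity) (by positivity)) h_weights.summable,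
          h_weights.tsum_eq, ENNReal.ofReal_add (by positivity) (by positivity)]
    _ = _ := by simp [a]

theorem integral_le_of_lintegral_ofReal_le {Ω : Type*} [MeasurableSpace Ω] {μ : Measure Ω}
    {f : Ω → ℝ} {B : ℝ} (hB : 0 ≤ B) (h : ∫⁻ ω, ENNReal.ofReal (f ω) ∂μ ≤ ENNReal.ofReal B) :
    ∫ ω, f ω ∂μ ≤ B := by
  by_cases hf : Integrable f μ
  · rw [integral_eq_lintegral_pos_part_sub_lintegral_neg_part hf]
    exact (sub_le_self _ ENNReal.toReal_nonneg).trans (ENNReal.toReal_le_of_le_ofReal hB h)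
  · rw [integral_undef hf]
    exact hB

/-- For `2n` mutually independent `φ`-smooth random variables
`X_1,…,X_n,Y_1,…,Y_n` (`n ≥ 2`, `φ ≥ 1`, `α ≥ 1`, `λ ∈ ℕ`) and
`g(x) = min{(α/x)·ln(α/x), n^λ}`, one has
`E[g(min_i (X_i + Y_i))] ≤ α·φ·(n² + 1)·ln(α·φ·n)`. -/
theorem expectation_g_min_le {Ω : Type*} [MeasurableSpace Ω]
    (μ : Measure Ω) [IsProbabilityMeasure μ]
    (n : ℕ) (hn : 2 ≤ n) (φ α : ℝ) (hφ : 1 ≤ φ) (hα : 1 ≤ α) (lam : ℕ)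
    (X Y : Fin n → Ω → ℝ)
    (hmX : ∀ i, Measurable (X i)) (hmY : ∀ i, Measurable (Y i))
    (hXsmooth : ∀ i, IsPhiSmooth μ φ (X i))
    (hYsmooth : ∀ i, IsPhiSmooth μ φ (Y i))
    (hindep : ProbabilityTheory.iIndepFun (Sum.elim X Y) μ) :
    ∫ ω, min ((α / ⨅ i, (X i ω + Y i ω)) * Real.log (α / ⨅ i, (X i ω + Y i ω)))
        ((n : ℝ) ^ lam) ∂μ
      ≤ α * φ * ((n : ℝ) ^ 2 + 1) * Real.log (α * φ * n) := by
  have : Nonempty (Fin n) := ⟨⟨0, by omega⟩⟩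
  have hn2 : (2 : ℝ) ≤ n := by exact_mod_cast hn
  have hαφn : 2 ≤ α * φ * n := by nlinarith [one_le_mul_of_one_le_of_one_le hα hφ]
  have h_tail : ∀ t, 0 < t → t ≤ (φ * n)⁻¹ →
      μ {ω | ⨅ i, X i ω + Y i ω < t} ≤ ENNReal.ofReal (n * φ ^ 2 / 2 * t ^ 2) :=
    fun t ht _ => by
      simpa using measure_iInf_add_lt_le (by linarith) (fun i => (hmX i).aemeasurable)
        (fun i => (hmY i).aemeasurable) hXsmooth hYsmooth
        (fun i => hindep.indepFun (i := .inl i) (j := .inr i) (by simp)) ht.le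
  have h_lint := lintegral_ofReal_div_mul_log_le (Measurable.iInf fun i => (hmX i).add (hmY i))
    (ae_iInf_add_pos (fun i => (hmX i).aemeasurable) (fun i => (hmY i).aemeasurable)
      hXsmooth hYsmooth) (by positivity) (by rw [← mul_assoc]; linarith) (by positivity) h_tail
  have h_log2 : 0.6931471803 < Real.log (α * φ * n) :=
    Real.log_two_gt_d9.trans_le (Real.log_le_log two_pos hαφn)
  refine integral_le_of_lintegral_ofReal_le (by positivity) <|
    (lintegral_mono fun ω => ENNReal.ofReal_le_ofReal (min_le_left _ _)).trans <|
      h_lint.trans (ENNReal.ofReal_le_ofReal ?_)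
  set L := Real.log (α * φ * n)
  have h_coeff : α * (n * φ ^ 2 / 2) / (φ * n) = α * φ / 2 := by field_simp
  have h_core : n * L + (5 / 8 * L + 45 / 32) ≤ (n ^ 2 + 1) * L := by
    nlinarith [mul_nonneg (mul_nonneg (sub_nonneg.mpr hn2) (by positivity : (0 : ℝ) ≤ n + 1))
      (by linarith : (0 : ℝ) ≤ L)]
  rw [← mul_assoc, h_coeff]
  nlinarith [mul_le_mul_of_nonneg_left h_core (by positivity : (0 : ℝ) ≤ α * φ)]
end
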